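/- arXiv:1905.02810 — 3 statements merged into one kernel-verified Lean document; each statement's English description precedes it below -/
import Mathlib

section
/- Incentive heterogeneity places the aggregate pair strictly below the optimal ROC: let p : 𝒳 → [0,1] be the true propensity score whose distribution p(X) has a positive continuous density f_p on [0,1], with p̄ = ∫ p dμ ∈ (0,1), and let λ : 𝒳 → (0,1) be a measurable function with 0 < λ(x) < 1 for μ-almost every x (the aggregate acceptance probability induced by heterogeneous cutoff thresholds). Define the aggregate rates PFPR_λ = (1/(1−p̄)) ∫ λ·(1−p) dμ and PTPR_λ = (1/p̄) ∫ λ·p dμ, and let c* ∈ (0,1) satisfy α(c*) = PFPR_λ, where α(c) = (1/(1−p̄)) ∫ 1{p > c}·(1−p) dμ and β(c) = (1/p̄) ∫ 1{p > c}·p dμ define the optimal ROC. Then β(c*) > PTPR_λ, i.e., the aggregate TPR/FPR pair lies strictly below the optimal ROC curve. -/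
open MeasureTheory
open scoped ENNReal

/-- Incentive heterogeneity places the aggregate TPR/FPR pair strictly
below the optimal ROC curve: if `0 < λ < 1` a.e. and `α(c*) = PFPR_λ` for
`c* ∈ (0,1)`, then `β(c*) > PTPR_λ`. -/
theorem aggregate_pair_strictly_below_roc
    {𝒳 : Type*} [MeasurableSpace 𝒳] (μ : Measure 𝒳) [IsProbabilityMeasure μ]
    (p : 𝒳 → ℝ) (hpm : Measurable p) (hp0 : ∀ x, 0 ≤ p x) (hp1 : ∀ x, p x ≤ 1)
    (f : ℝ → ℝ) (hfc : ContinuousOn f (Set.Icc 0 1))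
    (hfpos : ∀ u ∈ Set.Icc (0:ℝ) 1, 0 < f u)
    (hdens : μ.map p
      = (volume.restrict (Set.Icc 0 1)).withDensity (fun u => ENNReal.ofReal (f u)))
    (pbar : ℝ) (hpbar : pbar = ∫ x, p x ∂μ) (hpbar0 : 0 < pbar) (hpbar1 : pbar < 1)
    (lam : 𝒳 → ℝ) (hlm : Measurable lam) (hlam : ∀ᵐ x ∂μ, 0 < lam x ∧ lam x < 1)
    (PFPRlam PTPRlam : ℝ)
    (hPFPRlam : PFPRlam = (1 / (1 - pbar)) * ∫ x, lam x * (1 - p x) ∂μ)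
    (hPTPRlam : PTPRlam = (1 / pbar) * ∫ x, lam x * p x ∂μ)
    (α β : ℝ → ℝ)
    (hα : ∀ c, α c = (1 / (1 - pbar)) * ∫ x in {x | p x > c}, (1 - p x) ∂μ)
    (hβ : ∀ c, β c = (1 / pbar) * ∫ x in {x | p x > c}, p x ∂μ)
    (cstar : ℝ) (hcs : cstar ∈ Set.Ioo (0:ℝ) 1) (hmatch : α cstar = PFPRlam) :
    β cstar > PTPRlam := by
  obtain ⟨hc0, hc1⟩ := hcs
  set S : Set 𝒳 := {x | p x > cstar} with hSdef
  have hS : MeasurableSet S := measurableSet_lt measurable_const hpm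
  set ind : 𝒳 → ℝ := S.indicator (fun _ => (1:ℝ)) with hinddef
  have hindm : Measurable ind := measurable_const.indicator hS
  have hind_mem : ∀ x, x ∈ S → ind x = 1 := fun x hx => Set.indicator_of_mem hx _
  have hind_nmem : ∀ x, x ∉ S → ind x = 0 := fun x hx => Set.indicator_of_notMem hx _
  have hind01 : ∀ x, 0 ≤ ind x ∧ ind x ≤ 1 := by
    intro x
    by_cases hx : x ∈ S
    · rw [hind_mem x hx]; constructor <;> norm_num
    · rw [hind_nmem x hx]; constructor <;> norm_num
  -- integrability helper
  have int_of_bound : ∀ (g : 𝒳 → ℝ), Measurable g → (∀ᵐ x ∂μ, ‖g x‖ ≤ 1) →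
      Integrable g μ := by
    intro g hg hb
    exact (integrable_const (1:ℝ)).mono' hg.aestronglyMeasurable hb
  have hlam_bd : ∀ᵐ x ∂μ, ‖lam x‖ ≤ 1 := by
    filter_upwards [hlam] with x ⟨h1, h2⟩
    rw [Real.norm_eq_abs, abs_le]; constructor <;> linarith
  have int_lam : Integrable lam μ := int_of_bound lam hlm hlam_bd
  have int_ind : Integrable ind μ := int_of_bound ind hindm (by
    filter_upwards with x
    rw [Real.norm_eq_abs, abs_le]
    exact ⟨by linarith [(hind01 x).1], (hind01 x).2⟩)
  have int_lamp : Integrable (fun x => lam x * p x) μ := by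
    apply int_of_bound _ (hlm.mul hpm)
    filter_upwards [hlam] with x ⟨h1, h2⟩
    simp only [Pi.mul_apply, Pi.sub_apply]
    rw [Real.norm_eq_abs, abs_le]
    constructor <;> nlinarith [hp0 x, hp1 x]
  have int_indp : Integrable (fun x => ind x * p x) μ := by
    apply int_of_bound _ (hindm.mul hpm)
    filter_upwards with x
    simp only [Pi.mul_apply, Pi.sub_apply]
    rw [Real.norm_eq_abs, abs_le]
    obtain ⟨h1, h2⟩ := hind01 x
    constructor <;> nlinarith [hp0 x, hp1 x]
  -- the key function
  set h : 𝒳 → ℝ := fun x => (ind x - lam x) * (p x - cstar) with hhdef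
  have int_h : Integrable h μ := by
    apply int_of_bound _ ((hindm.sub hlm).mul (hpm.sub measurable_const))
    filter_upwards [hlam] with x ⟨h1, h2⟩
    simp only [Pi.mul_apply, Pi.sub_apply]
    rw [Real.norm_eq_abs, abs_le]
    obtain ⟨h3, h4⟩ := hind01 x
    constructor <;> nlinarith [hp0 x, hp1 x]
  have h_nonneg : ∀ᵐ x ∂μ, 0 ≤ h x := by
    filter_upwards [hlam] with x ⟨h1, h2⟩
    by_cases hx : x ∈ S
    · have hpx : cstar < p x := hx
      rw [hhdef]; simp only
      rw [hind_mem x hx]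
      nlinarith
    · have hpx : ¬ (cstar < p x) := hx
      push_neg at hpx
      rw [hhdef]; simp only
      rw [hind_nmem x hx]
      nlinarith
  -- μ S > 0
  have hSpos : 0 < μ S := by
    have h1 : μ S = (μ.map p) (Set.Ioi cstar) := by
      rw [Measure.map_apply hpm measurableSet_Ioi]; rfl
    rw [h1, hdens, withDensity_apply _ measurableSet_Ioi]
    have hres : (volume.restrict (Set.Icc (0:ℝ) 1)).restrict (Set.Ioi cstar)
        = volume.restrict (Set.Ioc cstar 1) := by
      rw [Measure.restrict_restrict measurableSet_Ioi]
      congr 1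
      ext u
      simp only [Set.mem_inter_iff, Set.mem_Ioi, Set.mem_Icc, Set.mem_Ioc]
      constructor
      · rintro ⟨h1, _, h3⟩; exact ⟨h1, h3⟩
      · rintro ⟨h1, h2⟩; exact ⟨h1, le_of_lt (lt_trans hc0 h1), h2⟩
    rw [hres]
    obtain ⟨u₀, hu₀, hmin⟩ := isCompact_Icc.exists_isMinOn
      (Set.nonempty_Icc.2 zero_le_one) hfc
    have hm : 0 < f u₀ := hfpos u₀ hu₀
    have hsub : Set.Ioc cstar 1 ⊆ Set.Icc (0:ℝ) 1 := by
      intro u hu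
      exact ⟨le_of_lt (lt_trans hc0 hu.1), hu.2⟩
    have hlow : ∀ u, (Set.Ioc cstar 1).indicator (fun _ => ENNReal.ofReal (f u₀)) u
        ≤ ENNReal.ofReal (f u) := by
      intro u
      by_cases hu : u ∈ Set.Ioc cstar 1
      · rw [Set.indicator_of_mem hu]
        exact ENNReal.ofReal_le_ofReal (hmin (hsub hu))
      · rw [Set.indicator_of_notMem hu]
        exact zero_le
    calc (0:ℝ≥0∞) < ENNReal.ofReal (f u₀) * ENNReal.ofReal (1 - cstar) := by
            apply ENNReal.mul_pos
            · simp [ENNReal.ofReal_pos.2 hm]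
              positivity
            · simp [ENNReal.ofReal_pos]
              linarith
      _ = ∫⁻ u, (Set.Ioc cstar 1).indicator (fun _ => ENNReal.ofReal (f u₀)) u
            ∂(volume.restrict (Set.Ioc cstar 1)) := by
            rw [lintegral_indicator_const measurableSet_Ioc,
              Measure.restrict_apply_self, Real.volume_Ioc]
      _ ≤ ∫⁻ u, ENNReal.ofReal (f u) ∂(volume.restrict (Set.Ioc cstar 1)) :=
            lintegral_mono hlow
  -- positivity of ∫ h
  have hintpos : 0 < ∫ x, h x ∂μ := by
    rw [integral_pos_iff_support_of_nonneg_ae h_nonneg int_h]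
    set T : Set 𝒳 := {x | ¬ (0 < lam x ∧ lam x < 1)} with hTdef
    have hT : μ T = 0 := hlam
    have hsub : S \ T ⊆ Function.support h := by
      rintro x ⟨hxS, hxT⟩
      have hx : 0 < lam x ∧ lam x < 1 := not_not.mp hxT
      have hpx : cstar < p x := hxS
      rw [Function.mem_support, hhdef]
      simp only
      rw [hind_mem x hxS]
      nlinarith [hx.1, hx.2]
    calc (0:ℝ≥0∞) < μ S := hSpos
      _ = μ (S \ T) := (measure_diff_null hT).symm
      _ ≤ μ (Function.support h) := measure_mono hsub
  -- indicator integral identities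
  have hindeq : ∀ (g : 𝒳 → ℝ), ∫ x in S, g x ∂μ = ∫ x, ind x * g x ∂μ := by
    intro g
    rw [← integral_indicator hS]
    congr 1
    funext x
    by_cases hx : x ∈ S
    · rw [Set.indicator_of_mem hx, hind_mem x hx, one_mul]
    · rw [Set.indicator_of_notMem hx, hind_nmem x hx, zero_mul]
  -- matching condition: ∫ ind (1-p) = ∫ lam (1-p)
  have hmatch' : ∫ x, ind x * (1 - p x) ∂μ = ∫ x, lam x * (1 - p x) ∂μ := by
    have hne : (1 : ℝ) / (1 - pbar) ≠ 0 := by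
      apply one_div_ne_zero; linarith
    have := hmatch
    rw [hα cstar, hPFPRlam] at this
    have h2 : ∫ x in S, (1 - p x) ∂μ = ∫ x, lam x * (1 - p x) ∂μ :=
      mul_left_cancel₀ hne this
    rw [← h2, hindeq]
  -- algebra
  have int_ind1p : Integrable (fun x => ind x * (1 - p x)) μ := by
    have : (fun x => ind x * (1 - p x)) = fun x => ind x - ind x * p x := by
      funext x; ring
    rw [this]; exact int_ind.sub int_indp
  have int_lam1p : Integrable (fun x => lam x * (1 - p x)) μ := by
    have : (fun x => lam x * (1 - p x)) = fun x => lam x - lam x * p x := by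
      funext x; ring
    rw [this]; exact int_lam.sub int_lamp
  have e1 : ∫ x, ind x * (1 - p x) ∂μ = (∫ x, ind x ∂μ) - ∫ x, ind x * p x ∂μ := by
    rw [← integral_sub int_ind int_indp]
    congr 1; funext x; ring
  have e2 : ∫ x, lam x * (1 - p x) ∂μ = (∫ x, lam x ∂μ) - ∫ x, lam x * p x ∂μ := by
    rw [← integral_sub int_lam int_lamp]
    congr 1; funext x; ring
  have e3 : ∫ x, h x ∂μ = ((∫ x, ind x * p x ∂μ) - ∫ x, lam x * p x ∂μ)
      - cstar * ((∫ x, ind x ∂μ) - ∫ x, lam x ∂μ) := by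
    have i1 : Integrable (fun x => ind x * p x - lam x * p x) μ :=
      int_indp.sub int_lamp
    have i2 : Integrable (fun x => ind x - lam x) μ := int_ind.sub int_lam
    have e0 : ∫ x, h x ∂μ
        = ∫ x, (ind x * p x - lam x * p x) - cstar * (ind x - lam x) ∂μ := by
      apply integral_congr_ae
      filter_upwards with x
      rw [hhdef]; ring
    have s1 : ∫ x, (ind x * p x - lam x * p x) - cstar * (ind x - lam x) ∂μ
        = (∫ x, ind x * p x - lam x * p x ∂μ)
          - ∫ x, cstar * (ind x - lam x) ∂μ :=
      integral_sub i1 (i2.const_mul cstar)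
    have s2 : ∫ x, ind x * p x - lam x * p x ∂μ
        = (∫ x, ind x * p x ∂μ) - ∫ x, lam x * p x ∂μ :=
      integral_sub int_indp int_lamp
    have s3 : ∫ x, cstar * (ind x - lam x) ∂μ
        = cstar * ∫ x, ind x - lam x ∂μ := integral_const_mul cstar _
    have s4 : ∫ x, ind x - lam x ∂μ = (∫ x, ind x ∂μ) - ∫ x, lam x ∂μ :=
      integral_sub int_ind int_lam
    rw [e0, s1, s2, s3, s4]
  set A := ∫ x, ind x ∂μ
  set B := ∫ x, lam x ∂μ
  set C := ∫ x, ind x * p x ∂μ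
  set E := ∫ x, lam x * p x ∂μ
  have hAB : A - C = B - E := by rw [← e1, ← e2, hmatch']
  have hCE : 0 < (C - E) - cstar * (A - B) := by rw [← e3]; exact hintpos
  have hDpos : E < C := by nlinarith
  -- conclude
  rw [hβ cstar, hPTPRlam]
  have hβeq : ∫ x in {x | p x > cstar}, p x ∂μ = C := hindeq p
  rw [hβeq]
  have hinv : 0 < (1 : ℝ) / pbar := by positivity
  exact (mul_lt_mul_iff_right₀ hinv).2 hDpos
end

section
/- Neyman–Pearson uniqueness of the threshold indicator: let f be a positive (Lebesgue-integrable) density on [0,1], let c ∈ (0,1), and let h : [0,1] → [0,1] be a measurable function satisfying ∫₀¹ h(u)·u·f(u) du = ∫_c¹ u·f(u) du and ∫₀¹ h(u)·(1−u)·f(u) du = ∫_c¹ (1−u)·f(u) du. Then h(u) = 1{u ≥ c} for Lebesgue-almost every u ∈ [0,1]. -/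
open MeasureTheory

/-- Neyman–Pearson uniqueness of the threshold indicator: if a
measurable `h : [0,1] → [0,1]` achieves the same power and size as the indicator
`1{u ≥ c}` under a positive integrable density `f` on `[0,1]`, then
`h(u) = 1{u ≥ c}` for Lebesgue-a.e. `u ∈ [0,1]`. -/
theorem neyman_pearson_uniqueness
    (f : ℝ → ℝ) (hfm : Measurable f)
    (hfi : IntegrableOn f (Set.Icc 0 1))
    (hfpos : ∀ᵐ u ∂(volume.restrict (Set.Icc (0:ℝ) 1)), 0 < f u)
    (hf1 : (∫ u in Set.Icc (0:ℝ) 1, f u) = 1)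
    (c : ℝ) (hc : c ∈ Set.Ioo (0:ℝ) 1)
    (h : ℝ → ℝ) (hhm : Measurable h)
    (hh01 : ∀ u ∈ Set.Icc (0:ℝ) 1, h u ∈ Set.Icc (0:ℝ) 1)
    (hpow : (∫ u in Set.Icc (0:ℝ) 1, h u * (u * f u))
      = ∫ u in Set.Icc c 1, u * f u)
    (hsize : (∫ u in Set.Icc (0:ℝ) 1, h u * ((1 - u) * f u))
      = ∫ u in Set.Icc c 1, (1 - u) * f u) :
    ∀ᵐ u ∂(volume.restrict (Set.Icc (0:ℝ) 1)), h u = if c ≤ u then 1 else 0 := by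
  set μ := volume.restrict (Set.Icc (0:ℝ) 1) with hμ
  set χ : ℝ → ℝ := fun u => if c ≤ u then 1 else 0 with hχ
  have hχm : Measurable χ := Measurable.ite measurableSet_Ici measurable_const measurable_const
  have hfint : Integrable f μ := hfi
  have hfabs : Integrable (fun u => |f u|) μ := hfint.abs
  -- a.e. facts
  have hmem : ∀ᵐ u ∂μ, u ∈ Set.Icc (0:ℝ) 1 := ae_restrict_mem measurableSet_Icc
  -- integrability helper
  have key : ∀ g : ℝ → ℝ, Measurable g → (∀ᵐ u ∂μ, |g u| ≤ 1) →
      Integrable (fun u => g u * f u) μ := by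
    intro g hgm hgb
    refine Integrable.mono' hfabs (hgm.mul hfm).aestronglyMeasurable ?_
    filter_upwards [hgb] with u hu
    rw [Real.norm_eq_abs, abs_mul]
    calc |g u| * |f u| ≤ 1 * |f u| := by
          exact mul_le_mul_of_nonneg_right hu (abs_nonneg _)
      _ = |f u| := one_mul _
  have hhb : ∀ᵐ u ∂μ, 0 ≤ h u ∧ h u ≤ 1 := by
    filter_upwards [hmem] with u hu
    exact ⟨(hh01 u hu).1, (hh01 u hu).2⟩
  have hχb : ∀ᵐ u ∂μ, 0 ≤ χ u ∧ χ u ≤ 1 := by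
    filter_upwards with u
    by_cases hcu : c ≤ u <;> simp [hχ, hcu]
  -- integrabilities
  have I1 : Integrable (fun u => h u * (u * f u)) μ := by
    have := key (fun u => h u * u) (hhm.mul measurable_id) ?_
    · exact this.congr (by filter_upwards with u; ring)
    · filter_upwards [hhb, hmem] with u ⟨h0, h1⟩ hu
      rw [abs_mul]
      calc |h u| * |u| ≤ 1 * 1 := by
            apply mul_le_mul _ _ (abs_nonneg _) zero_le_one
            · rwa [abs_of_nonneg h0]
            · rw [abs_of_nonneg hu.1]; exact hu.2
        _ = 1 := one_mul 1
  have I2 : Integrable (fun u => h u * ((1 - u) * f u)) μ := by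
    have := key (fun u => h u * (1 - u)) (hhm.mul (measurable_const.sub measurable_id)) ?_
    · exact this.congr (by filter_upwards with u; ring)
    · filter_upwards [hhb, hmem] with u ⟨h0, h1⟩ hu
      rw [abs_mul]
      calc |h u| * |1 - u| ≤ 1 * 1 := by
            apply mul_le_mul _ _ (abs_nonneg _) zero_le_one
            · rwa [abs_of_nonneg h0]
            · rw [abs_of_nonneg (by linarith [hu.2])]; linarith [hu.1]
        _ = 1 := one_mul 1
  have I3 : Integrable (fun u => χ u * (u * f u)) μ := by
    have := key (fun u => χ u * u) (hχm.mul measurable_id) ?_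
    · exact this.congr (by filter_upwards with u; ring)
    · filter_upwards [hχb, hmem] with u ⟨h0, h1⟩ hu
      rw [abs_mul]
      calc |χ u| * |u| ≤ 1 * 1 := by
            apply mul_le_mul _ _ (abs_nonneg _) zero_le_one
            · rwa [abs_of_nonneg h0]
            · rw [abs_of_nonneg hu.1]; exact hu.2
        _ = 1 := one_mul 1
  have I4 : Integrable (fun u => χ u * ((1 - u) * f u)) μ := by
    have := key (fun u => χ u * (1 - u)) (hχm.mul (measurable_const.sub measurable_id)) ?_
    · exact this.congr (by filter_upwards with u; ring)
    · filter_upwards [hχb, hmem] with u ⟨h0, h1⟩ hu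
      rw [abs_mul]
      calc |χ u| * |1 - u| ≤ 1 * 1 := by
            apply mul_le_mul _ _ (abs_nonneg _) zero_le_one
            · rwa [abs_of_nonneg h0]
            · rw [abs_of_nonneg (by linarith [hu.2])]; linarith [hu.1]
        _ = 1 := one_mul 1
  -- indicator integrals
  have hIcc : Set.Ici c ∩ Set.Icc (0:ℝ) 1 = Set.Icc c 1 := by
    ext u
    simp only [Set.mem_inter_iff, Set.mem_Ici, Set.mem_Icc]
    constructor
    · rintro ⟨h1, h2, h3⟩; exact ⟨h1, h3⟩
    · rintro ⟨h1, h2⟩; exact ⟨h1, le_trans hc.1.le h1, h2⟩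
  have ind_int : ∀ g : ℝ → ℝ, (∫ u in Set.Icc (0:ℝ) 1, χ u * g u)
      = ∫ u in Set.Icc c 1, g u := by
    intro g
    have : (fun u => χ u * g u) = Set.indicator (Set.Ici c) g := by
      funext u
      by_cases hcu : c ≤ u <;> simp [hχ, hcu, Set.indicator, Set.mem_Ici]
    rw [this, integral_indicator measurableSet_Ici, Measure.restrict_restrict measurableSet_Ici,
      hIcc]
  -- the combined function
  set φ : ℝ → ℝ := fun u => (h u - χ u) * ((u - c) * f u) with hφ
  have φeq : φ = fun u => (1 - c) * (h u * (u * f u) - χ u * (u * f u))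
      - c * (h u * ((1 - u) * f u) - χ u * ((1 - u) * f u)) := by
    funext u; simp only [hφ]; ring
  have Iφ : Integrable φ μ := by
    rw [φeq]
    exact (((I1.sub I3).const_mul (1 - c)).sub ((I2.sub I4).const_mul c))
  have intφ : ∫ u, φ u ∂μ = 0 := by
    have J1 : Integrable (fun u => h u * (u * f u) - χ u * (u * f u)) μ := I1.sub I3
    have J2 : Integrable (fun u => h u * ((1 - u) * f u) - χ u * ((1 - u) * f u)) μ := I2.sub I4
    rw [show (∫ u, φ u ∂μ) = ∫ u, ((1 - c) * (h u * (u * f u) - χ u * (u * f u))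
        - c * (h u * ((1 - u) * f u) - χ u * ((1 - u) * f u))) ∂μ from
      integral_congr_ae (Filter.Eventually.of_forall fun u => by simp only [hφ]; ring)]
    rw [integral_sub (J1.const_mul (1 - c)) (J2.const_mul c),
      integral_const_mul, integral_const_mul, integral_sub I1 I3, integral_sub I2 I4]
    have e1 : ∫ u, χ u * (u * f u) ∂μ = ∫ u in Set.Icc c 1, u * f u := ind_int _
    have e2 : ∫ u, χ u * ((1 - u) * f u) ∂μ = ∫ u in Set.Icc c 1, (1 - u) * f u := ind_int _
    rw [hμ] at *
    rw [e1, e2, hpow, hsize]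
    ring
  -- nonpositivity
  have hnonpos : ∀ᵐ u ∂μ, φ u ≤ 0 := by
    filter_upwards [hmem, hfpos, hhb] with u hu hf ⟨h0, h1⟩
    by_cases hcu : c ≤ u
    · have : χ u = 1 := by simp [hχ, hcu]
      rw [hφ]; simp only [this]
      have : (h u - 1) ≤ 0 := by linarith
      have h2 : 0 ≤ (u - c) * f u := mul_nonneg (by linarith) hf.le
      exact mul_nonpos_of_nonpos_of_nonneg this h2
    · have : χ u = 0 := by simp [hχ, hcu]
      rw [hφ]; simp only [this, sub_zero]
      push_neg at hcu
      have h2 : (u - c) * f u ≤ 0 := mul_nonpos_of_nonpos_of_nonneg (by linarith) hf.le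
      exact mul_nonpos_of_nonneg_of_nonpos h0 h2
  -- conclude φ = 0 a.e.
  have hzero : ∀ᵐ u ∂μ, φ u = 0 := by
    have hneg : 0 ≤ᵐ[μ] fun u => -φ u := by
      filter_upwards [hnonpos] with u hu
      simpa using neg_nonneg.mpr hu
    have hint : ∫ u, -φ u ∂μ = 0 := by rw [integral_neg, intφ, neg_zero]
    have := (integral_eq_zero_iff_of_nonneg_ae hneg Iφ.neg).mp hint
    filter_upwards [this] with u hu
    have : -φ u = 0 := by simpa using hu
    linarith
  -- u ≠ c a.e.
  have hne : ∀ᵐ u ∂μ, u ≠ c := by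
    refine ae_restrict_of_ae ?_
    have : volume ({c} : Set ℝ) = 0 := Real.volume_singleton
    rw [ae_iff]
    convert this using 2
    ext u; simp
  filter_upwards [hzero, hfpos, hne] with u hu hf hu_ne
  have hfne : f u ≠ 0 := ne_of_gt hf
  have huc : u - c ≠ 0 := sub_ne_zero.mpr hu_ne
  have : (h u - χ u) * ((u - c) * f u) = 0 := hu
  rcases mul_eq_zero.mp this with h' | h'
  · have : h u = χ u := by linarith [sub_eq_zero.mp h']
    simpa [hχ] using this
  · exact absurd h' (mul_ne_zero huc hfne)
end

section
/- The true propensity score maximizes the population AUC: let (𝒳, μ) be a probability space, p : 𝒳 → [0,1] measurable with p̄ = ∫ p dμ ∈ (0,1), and suppose (μ ⊗ μ)({(x,w) : p(x) = p(w)}) = 0. Define for any measurable scoring function g : 𝒳 → ℝ the population AUC PAUC(g) = (1/(p̄(1−p̄))) ∬ 1{g(x) > g(w)}·p(x)·(1−p(w)) dμ(x) dμ(w). Then for every measurable g, PAUC(g) ≤ PAUC(p). -/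
open MeasureTheory

/-- The true propensity score maximizes the population AUC:
for every measurable scoring function `g`, `PAUC(g) ≤ PAUC(p)`. -/
theorem true_propensity_maximizes_pauc
    {𝒳 : Type*} [MeasurableSpace 𝒳] (μ : Measure 𝒳) [IsProbabilityMeasure μ]
    (p : 𝒳 → ℝ) (hpm : Measurable p) (hp0 : ∀ x, 0 ≤ p x) (hp1 : ∀ x, p x ≤ 1)
    (pbar : ℝ) (hpbar : pbar = ∫ x, p x ∂μ) (hpbar0 : 0 < pbar) (hpbar1 : pbar < 1)
    (hties : (μ.prod μ) {z : 𝒳 × 𝒳 | p z.1 = p z.2} = 0)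
    (PAUC : (𝒳 → ℝ) → ℝ)
    (hPAUC : ∀ g : 𝒳 → ℝ, PAUC g = (1 / (pbar * (1 - pbar))) *
      ∫ z : 𝒳 × 𝒳, (if g z.1 > g z.2 then 1 else 0) * p z.1 * (1 - p z.2) ∂μ.prod μ)
    (g : 𝒳 → ℝ) (hgm : Measurable g) :
    PAUC g ≤ PAUC p := by
  classical
  set F : (𝒳 → ℝ) → 𝒳 × 𝒳 → ℝ :=
    fun f z => (if f z.1 > f z.2 then 1 else 0) * p z.1 * (1 - p z.2) with hFdef
  set M : 𝒳 × 𝒳 → ℝ := fun z => max (p z.1 * (1 - p z.2)) (p z.2 * (1 - p z.1)) with hMdef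
  -- measurability
  have hFm : ∀ f : 𝒳 → ℝ, Measurable f → Measurable (F f) := by
    intro f hf
    have hS : MeasurableSet {z : 𝒳 × 𝒳 | f z.2 < f z.1} :=
      measurableSet_lt (hf.comp measurable_snd) (hf.comp measurable_fst)
    exact ((Measurable.ite hS measurable_const measurable_const).mul
      (hpm.comp measurable_fst)).mul (measurable_const.sub (hpm.comp measurable_snd))
  have hMm : Measurable M :=
    ((hpm.comp measurable_fst).mul (measurable_const.sub (hpm.comp measurable_snd))).max
      ((hpm.comp measurable_snd).mul (measurable_const.sub (hpm.comp measurable_fst)))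
  -- integrability
  have hbnd : ∀ (f : 𝒳 → ℝ) (z : 𝒳 × 𝒳), ‖F f z‖ ≤ 1 := by
    intro f z
    have a0 := hp0 z.1; have a1 := hp1 z.1; have b0 := hp0 z.2; have b1 := hp1 z.2
    rw [Real.norm_eq_abs]
    simp only [hFdef]
    split_ifs with h
    · rw [one_mul, abs_of_nonneg (mul_nonneg a0 (by linarith))]; nlinarith
    · simp
  have hFi : ∀ f : 𝒳 → ℝ, Measurable f → Integrable (F f) (μ.prod μ) := by
    intro f hf
    exact (integrable_const (1:ℝ)).mono' ((hFm f hf).aestronglyMeasurable)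
      (ae_of_all _ fun z => hbnd f z)
  have hFsi : ∀ f : 𝒳 → ℝ, Measurable f →
      Integrable (fun z : 𝒳 × 𝒳 => F f z.swap) (μ.prod μ) := by
    intro f hf
    exact (integrable_const (1:ℝ)).mono' (((hFm f hf).comp measurable_swap).aestronglyMeasurable)
      (ae_of_all _ fun z => hbnd f z.swap)
  have hMi : Integrable M (μ.prod μ) := by
    refine (integrable_const (1:ℝ)).mono' hMm.aestronglyMeasurable (ae_of_all _ fun z => ?_)
    have a0 := hp0 z.1; have a1 := hp1 z.1; have b0 := hp0 z.2; have b1 := hp1 z.2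
    rw [Real.norm_eq_abs, abs_le]
    constructor
    · have : (0:ℝ) ≤ p z.1 * (1 - p z.2) := mul_nonneg a0 (by linarith)
      have h2 := le_max_left (p z.1 * (1 - p z.2)) (p z.2 * (1 - p z.1))
      simp only [hMdef]; linarith
    · simp only [hMdef, max_le_iff]; constructor <;> nlinarith
  -- swap invariance of the integral
  have hswap : ∀ f : 𝒳 → ℝ, Measurable f →
      ∫ z, F f z.swap ∂(μ.prod μ) = ∫ z, F f z ∂(μ.prod μ) := by
    intro f hf
    rw [← integral_map measurable_swap.aemeasurable]
    · rw [Measure.prod_swap]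
    · rw [Measure.prod_swap]; exact (hFm f hf).aestronglyMeasurable
  -- pointwise key inequality
  have hkey : ∀ z : 𝒳 × 𝒳, F g z + F g z.swap ≤ M z := by
    intro z
    have a0 := hp0 z.1; have a1 := hp1 z.1; have b0 := hp0 z.2; have b1 := hp1 z.2
    have hA : p z.1 * (1 - p z.2) ≤ M z := le_max_left _ _
    have hB : p z.2 * (1 - p z.1) ≤ M z := le_max_right _ _
    have hM0 : (0:ℝ) ≤ M z := le_trans (mul_nonneg a0 (by linarith)) hA
    simp only [hFdef, Prod.fst_swap, Prod.snd_swap]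
    split_ifs with h1 h2 h2
    · exact absurd h2 (not_lt.2 h1.le)
    · simp only [one_mul, zero_mul]; linarith
    · simp only [one_mul, zero_mul]; linarith
    · simp only [zero_mul]; linarith
  -- a.e. equality for p
  have hne : ∀ᵐ z ∂(μ.prod μ), p z.1 ≠ p z.2 := by
    rw [ae_iff]
    simpa using hties
  have haeeq : ∀ᵐ z ∂(μ.prod μ), F p z + F p z.swap = M z := by
    filter_upwards [hne] with z hz
    simp only [hFdef, hMdef, Prod.fst_swap, Prod.snd_swap]
    have a0 := hp0 z.1; have a1 := hp1 z.1; have b0 := hp0 z.2; have b1 := hp1 z.2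
    rcases hz.lt_or_gt with h | h
    · rw [if_neg (not_lt.2 h.le), if_pos h, max_eq_right (by nlinarith)]; ring
    · rw [if_pos h, if_neg (not_lt.2 h.le), max_eq_left (by nlinarith)]; ring
  -- main integral inequality
  have main : ∫ z, F g z ∂(μ.prod μ) ≤ ∫ z, F p z ∂(μ.prod μ) := by
    have h1 : ∫ z, F g z ∂(μ.prod μ) + ∫ z, F g z.swap ∂(μ.prod μ) ≤
        ∫ z, M z ∂(μ.prod μ) := by
      rw [← integral_add (hFi g hgm) (hFsi g hgm)]
      exact integral_mono ((hFi g hgm).add (hFsi g hgm)) hMi hkey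
    have h2 : ∫ z, M z ∂(μ.prod μ) =
        ∫ z, F p z ∂(μ.prod μ) + ∫ z, F p z.swap ∂(μ.prod μ) := by
      rw [← integral_add (hFi p hpm) (hFsi p hpm)]
      exact (integral_congr_ae haeeq).symm
    rw [hswap g hgm] at h1
    rw [hswap p hpm] at h2
    linarith
  rw [hPAUC g, hPAUC p]
  have hc : (0:ℝ) ≤ 1 / (pbar * (1 - pbar)) := le_of_lt (div_pos one_pos (mul_pos hpbar0 (by linarith)))
  simp only [hFdef] at main
  exact mul_le_mul_of_nonneg_left main hc
end
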